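/- arXiv:0812.3933 — 6 statements merged into one kernel-verified Lean document; each statement's English description precedes it below -/
import Mathlib

section
/- For every permutation π = [π_0, π_1, …, π_{n+1}] and every prefix reversal β = β(1,j) with 3 ≤ j ≤ n+1, the number of breakpoints decreases by at most one, i.e., b(π) − b(π·β) ≤ 1. -/
/-- A permutation on `n` elements: a list `[π₀, π₁, …, π_{n+1}]` of distinct
naturals that is a rearrangement of `0, 1, …, n+1` with `π₀ = 0` and
`π_{n+1} = n+1`. -/
def IsPerm (n : ℕ) (π : List ℕ) : Prop :=
  π.Perm (List.range (n + 2)) ∧ π.getD 0 0 = 0 ∧ π.getD (n + 1) 0 = n + 1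

/-- Breakpoint count `b(π)`: `1` plus the number of indices `i` with
`2 ≤ i ≤ n+1` and `|π_i − π_{i−1}| ≠ 1` (these are exactly the consecutive
pairs of the tail `π₁, …, π_{n+1}`). -/
def bp (π : List ℕ) : ℕ :=
  1 + ((π.drop 1).zip (π.drop 2)).countP
        (fun p => !(p.1 + 1 == p.2 || p.2 + 1 == p.1))

/-- Redefined breakpoint count `b′(π)`: the number of indices `i` with
`1 ≤ i ≤ n+1` and `|π_i − π_{i−1}| ≠ 1`. -/
def bp' (π : List ℕ) : ℕ :=
  (π.zip (π.drop 1)).countP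
    (fun p => !(p.1 + 1 == p.2 || p.2 + 1 == p.1))

/-- Prefix reversal `β(1,j)`: `[π₀, π_{j−1}, …, π₁, π_j, …, π_{n+1}]`. -/
def prefixReversal (π : List ℕ) (j : ℕ) : List ℕ :=
  π.take 1 ++ ((π.drop 1).take (j - 1)).reverse ++ π.drop j

/-- Prefix transposition `τ(1,j,k)`:
`[π₀, π_j, …, π_{k−1}, π₁, …, π_{j−1}, π_k, …, π_{n+1}]`. -/
def prefixTransposition (π : List ℕ) (j k : ℕ) : List ℕ :=
  π.take 1 ++ (π.drop j).take (k - j) ++ (π.drop 1).take (j - 1) ++ π.drop k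

/-- Prefix transreversal `βτ(1,j,k)`:
`[π₀, π_j, …, π_{k−1}, π_{j−1}, …, π₁, π_k, …, π_{n+1}]`. -/
def prefixTransreversal (π : List ℕ) (j k : ℕ) : List ℕ :=
  π.take 1 ++ (π.drop j).take (k - j) ++ ((π.drop 1).take (j - 1)).reverse ++ π.drop k

/-- A prefix operation: a prefix reversal, a prefix transposition, or a
prefix transreversal. -/
inductive PrefOp
  | rev (j : ℕ)
  | trans (j k : ℕ)
  | transrev (j k : ℕ)

/-- Apply a prefix operation to a permutation. -/
def PrefOp.apply (π : List ℕ) : PrefOp → List ℕ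
  | .rev j => prefixReversal π j
  | .trans j k => prefixTransposition π j k
  | .transrev j k => prefixTransreversal π j k

/-- Validity of a prefix operation on a permutation of `n` elements:
`3 ≤ j ≤ n+1` for a prefix reversal, `2 ≤ j < k ≤ n+1` for a prefix
transposition or a prefix transreversal. -/
def PrefOp.Valid (n : ℕ) : PrefOp → Prop
  | .rev j => 3 ≤ j ∧ j ≤ n + 1
  | .trans j k => 2 ≤ j ∧ j < k ∧ k ≤ n + 1
  | .transrev j k => 2 ≤ j ∧ j < k ∧ k ≤ n + 1

/-- Is the operation a prefix reversal? -/
def PrefOp.isRev : PrefOp → Bool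
  | .rev _ => true
  | _ => false

/-- Is the operation a prefix transreversal? -/
def PrefOp.isTransrev : PrefOp → Bool
  | .transrev _ _ => true
  | _ => false

/-- Apply a sequence of prefix operations, left to right. -/
def applySeq : List ℕ → List PrefOp → List ℕ
  | π, [] => π
  | π, o :: os => applySeq (o.apply π) os

/-- All operations in the sequence are valid for permutations of `n` elements. -/
def ValidSeq (n : ℕ) (ops : List PrefOp) : Prop :=
  ∀ o ∈ ops, o.Valid n

/-- `fm π` is `m(π) + 1`, where `m(π)` is the largest index `m` such that
`π_i = i` for all `0 ≤ i ≤ m`; i.e. the length of the longest already-sorted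
prefix of `π`. -/
def fm (π : List ℕ) : ℕ :=
  ((List.range π.length).takeWhile (fun i => π.getD i 0 == i)).length

/-- Forward-march prefix reversal: reverses the segment
`π_{m(π)+1}, …, π_{j−1}` in place. -/
def fmPrefixReversal (π : List ℕ) (j : ℕ) : List ℕ :=
  π.take (fm π) ++ ((π.drop (fm π)).take (j - fm π)).reverse ++ π.drop j

/-- Forward-march prefix transposition: cuts the segment
`π_{m(π)+1}, …, π_{j−1}` and pastes it between `π_{k−1}` and `π_k`. -/
def fmPrefixTransposition (π : List ℕ) (j k : ℕ) : List ℕ :=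
  π.take (fm π) ++ (π.drop j).take (k - j) ++
    (π.drop (fm π)).take (j - fm π) ++ π.drop k

/-- A forward-march operation: an FM prefix reversal or an FM prefix
transposition. -/
inductive FMOp
  | rev (j : ℕ)
  | trans (j k : ℕ)

/-- Apply a forward-march operation. -/
def FMOp.apply (π : List ℕ) : FMOp → List ℕ
  | .rev j => fmPrefixReversal π j
  | .trans j k => fmPrefixTransposition π j k

/-- Validity of a forward-march operation on a permutation `π` of `n`
elements: `m(π)+3 ≤ j ≤ n+1` for an FM prefix reversal, and
`m(π)+2 ≤ j ≤ n`, `j < k ≤ n+1` for an FM prefix transposition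
(recall `fm π = m(π) + 1`). -/
def FMOp.Valid (n : ℕ) (π : List ℕ) : FMOp → Prop
  | .rev j => fm π + 2 ≤ j ∧ j ≤ n + 1
  | .trans j k => fm π + 1 ≤ j ∧ j ≤ n ∧ j < k ∧ k ≤ n + 1

/-- Is the forward-march operation an FM prefix reversal? -/
def FMOp.isRev : FMOp → Bool
  | .rev _ => true
  | _ => false

/-- Apply a sequence of forward-march operations, left to right. -/
def applyFMSeq : List ℕ → List FMOp → List ℕ
  | π, [] => π
  | π, o :: os => applyFMSeq (o.apply π) os

/-- Validity of a sequence of forward-march operations, where each operation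
must be valid for the permutation obtained after applying the previous ones. -/
def FMValidSeq (n : ℕ) : List ℕ → List FMOp → Prop
  | _, [] => True
  | π, o :: os => o.Valid n π ∧ FMValidSeq n (o.apply π) os

/-! Besides the one always counted, the breakpoints of `π` sit between neighbours of its tail
`π₁, …, π_{n+1}`. A prefix reversal turns that tail `A ++ B` into `A.reverse ++ B`: the
neighbouring pairs inside `A` are only reversed and swapped, those inside `B` are untouched,
so at most the pair at the junction of `A` and `B` can stop being a breakpoint. -/

theorem List.zip_tail_eq_zip_dropLast_tail {α : Type*} (l : List α) :
    l.zip l.tail = l.dropLast.zip l.tail := by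
  rw [List.zip_eq_zip_take_min, List.dropLast_eq_take]
  simp [List.take_of_length_le]

theorem List.zip_tail_reverse {α : Type*} (l : List α) :
    l.reverse.zip l.reverse.tail = ((l.zip l.tail).map Prod.swap).reverse := by
  rw [List.zip_tail_eq_zip_dropLast_tail, List.zip_tail_eq_zip_dropLast_tail, List.zip_swap,
    List.zip_eq_zipWith, List.zip_eq_zipWith, List.reverse_zipWith (by simp)]
  simp

theorem bp'_reverse (l : List ℕ) : bp' l.reverse = bp' l := by
  simp only [bp', List.drop_one, List.zip_tail_reverse, List.countP_reverse, List.countP_map]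
  congr 1
  funext p
  simp [Bool.and_comm]

theorem bp'_cons_cons (a b : ℕ) (l : List ℕ) :
    bp' (a :: b :: l) = bp' (b :: l) + if a + 1 = b ∨ b + 1 = a then 0 else 1 := by
  simp only [bp', List.drop_one, List.tail_cons, List.zip_cons_cons, List.countP_cons]
  simp [← not_or, ite_not]

theorem bp'_le_bp'_cons (a : ℕ) (l : List ℕ) : bp' l ≤ bp' (a :: l) := by
  cases l with
  | nil => simp [bp']
  | cons b l => rw [bp'_cons_cons]; omega

theorem bp'_cons_le (a : ℕ) (l : List ℕ) : bp' (a :: l) ≤ bp' l + 1 := by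
  cases l with
  | nil => simp [bp']
  | cons b l => rw [bp'_cons_cons]; split <;> omega

theorem bp'_add_bp'_le_bp'_append (X Y : List ℕ) : bp' X + bp' Y ≤ bp' (X ++ Y) := by
  induction X with
  | nil => simp [bp']
  | cons a X ih =>
    cases X with
    | nil => simpa [bp'] using bp'_le_bp'_cons a Y
    | cons b X => simp only [List.cons_append, bp'_cons_cons] at ih ⊢; omega

theorem bp'_append_le_bp'_add_bp'_add_one (X Y : List ℕ) :
    bp' (X ++ Y) ≤ bp' X + bp' Y + 1 := by
  induction X with
  | nil => simp [bp']
  | cons a X ih =>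
    cases X with
    | nil => simpa [bp'] using bp'_cons_le a Y
    | cons b X => simp only [List.cons_append, bp'_cons_cons] at ih ⊢; omega

theorem bp'_append_le_bp'_reverse_append_add_one (A B : List ℕ) :
    bp' (A ++ B) ≤ bp' (A.reverse ++ B) + 1 :=
  calc bp' (A ++ B) ≤ bp' A + bp' B + 1 := bp'_append_le_bp'_add_bp'_add_one A B
    _ = bp' A.reverse + bp' B + 1 := by rw [bp'_reverse]
    _ ≤ bp' (A.reverse ++ B) + 1 := by gcongr; exact bp'_add_bp'_le_bp'_append _ _

theorem bp_eq_one_add_bp'_drop_one (π : List ℕ) : bp π = 1 + bp' (π.drop 1) := by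
  rw [bp, bp', List.drop_drop]

theorem prefixReversal_drop_one (π : List ℕ) {j : ℕ} (hj : 1 ≤ j) :
    (prefixReversal π j).drop 1 =
      ((π.drop 1).take (j - 1)).reverse ++ (π.drop 1).drop (j - 1) := by
  obtain ⟨k, rfl⟩ : ∃ k, j = k + 1 := ⟨j - 1, by omega⟩
  cases π <;> simp [prefixReversal]

theorem bp_le_bp_prefixReversal_add_one (π : List ℕ) {j : ℕ} (hj : 1 ≤ j) :
    bp π ≤ bp (prefixReversal π j) + 1 := by
  have h := bp'_append_le_bp'_reverse_append_add_one
    ((π.drop 1).take (j - 1)) ((π.drop 1).drop (j - 1))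
  rw [List.take_append_drop] at h
  rw [bp_eq_one_add_bp'_drop_one, bp_eq_one_add_bp'_drop_one, prefixReversal_drop_one π hj]
  omega

theorem prefixReversal_removes_at_most_one_breakpoint_general
    (π : List ℕ)
    (j : ℕ) (hj1 : 3 ≤ j) :
    bp π - bp (prefixReversal π j) ≤ 1 := by
  have := bp_le_bp_prefixReversal_add_one π (j := j) (by omega)
  omega

/-- a prefix reversal removes at most one breakpoint. -/
theorem prefixReversal_removes_at_most_one_breakpoint
    (n : ℕ) (π : List ℕ) (hπ : IsPerm n π)
    (j : ℕ) (hj1 : 3 ≤ j) (hj2 : j ≤ n + 1) :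
    bp π - bp (prefixReversal π j) ≤ 1 :=
  prefixReversal_removes_at_most_one_breakpoint_general π j hj1
end

section
/- For every permutation π = [π_0, π_1, …, π_{n+1}] and every prefix transposition τ = τ(1,j,k) with 2 ≤ j < k ≤ n+1, the number of breakpoints decreases by at most two, i.e., b(π) − b(π·τ) ≤ 2. -/
/-!
Breakpoints only count adjacencies inside the tail `π₁ … π_{n+1}`, and on that tail `τ(1,j,k)`
swaps two consecutive blocks: `B C D ↦ C B D` with `B = π₁ … π_{j−1}`, `C = π_j … π_{k−1}`.
Cutting a list into blocks destroys only the adjacencies at the cuts, here `B|C` and `C|D`, and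
gluing blocks together never destroys one, so at most two breakpoints disappear. The third cut of
`τ`, between `π₀` and `π₁`, is invisible to `b`.
-/

namespace List

variable {α : Type*}

theorem zip_tail_append {x y : List α} (hx : x ≠ []) (hy : y ≠ []) :
    (x ++ y).zip (x ++ y).tail = x.zip x.tail ++ (x.getLast hx, y.head hy) :: y.zip y.tail := by
  induction x with
  | nil => contradiction
  | cons a xs ih =>
    cases xs with
    | nil =>
      cases y with
      | nil => contradiction
      | cons b ys => simp
    | cons b xs =>
      have h := ih (cons_ne_nil b xs)
      simp only [cons_append, tail_cons, zip_cons_cons] at h ⊢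
      simp [h]

def adjCount (p : α × α → Bool) (l : List α) : ℕ :=
  (l.zip l.tail).countP p

variable (p : α × α → Bool)

theorem adjCount_append {x y : List α} (hx : x ≠ []) (hy : y ≠ []) :
    adjCount p (x ++ y) =
      adjCount p x + adjCount p y + if p (x.getLast hx, y.head hy) then 1 else 0 := by
  rw [adjCount, zip_tail_append hx hy, countP_append, countP_cons, adjCount, adjCount]
  omega

theorem adjCount_append_le (x y : List α) :
    adjCount p (x ++ y) ≤ adjCount p x + adjCount p y + 1 := by
  rcases eq_or_ne x [] with rfl | hx
  · simp [adjCount]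
  rcases eq_or_ne y [] with rfl | hy
  · simp [adjCount]
  rw [adjCount_append p hx hy]
  split <;> omega

theorem adjCount_le_append (x y : List α) :
    adjCount p x + adjCount p y ≤ adjCount p (x ++ y) := by
  rcases eq_or_ne x [] with rfl | hx
  · simp [adjCount]
  rcases eq_or_ne y [] with rfl | hy
  · simp [adjCount]
  rw [adjCount_append p hx hy]
  omega

theorem adjCount_append_append_le_swap (b c d : List α) :
    adjCount p (b ++ c ++ d) ≤ adjCount p (c ++ b ++ d) + 2 := by
  have := adjCount_append_le p b (c ++ d)
  have := adjCount_append_le p c d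
  have := adjCount_le_append p c (b ++ d)
  have := adjCount_le_append p b d
  simp only [append_assoc]
  omega

end List

open List

theorem bp_eq_one_add_adjCount (π : List ℕ) :
    bp π = 1 + adjCount (fun p => !(p.1 + 1 == p.2 || p.2 + 1 == p.1)) (π.drop 1) := by
  rw [bp, adjCount, tail_drop]

theorem bp_le_add_two_of_drop_one_swap {π σ b c d : List ℕ} (hπ : π.drop 1 = b ++ c ++ d)
    (hσ : σ.drop 1 = c ++ b ++ d) : bp π ≤ bp σ + 2 := by
  rw [bp_eq_one_add_adjCount, bp_eq_one_add_adjCount, hπ, hσ, add_assoc]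
  gcongr
  exact adjCount_append_append_le_swap _ b c d

theorem drop_one_eq_append {π : List ℕ} {j k : ℕ} (hj : 1 ≤ j) (hjk : j ≤ k) :
    π.drop 1 = (π.drop 1).take (j - 1) ++ (π.drop j).take (k - j) ++ π.drop k := by
  have h1 : (π.drop 1).drop (j - 1) = π.drop j := by rw [drop_drop]; congr 1; omega
  have h2 : (π.drop j).drop (k - j) = π.drop k := by rw [drop_drop]; congr 1; omega
  rw [append_assoc, ← h2, take_append_drop, ← h1, take_append_drop]

theorem drop_one_prefixTransposition (π : List ℕ) (j k : ℕ) :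
    (prefixTransposition π j k).drop 1 =
      (π.drop j).take (k - j) ++ (π.drop 1).take (j - 1) ++ π.drop k := by
  cases π <;> simp [prefixTransposition]

theorem prefixTransposition_removes_at_most_two_breakpoints_general
    (π : List ℕ)
    (j k : ℕ) (hj : 2 ≤ j) (hjk : j < k) :
    bp π - bp (prefixTransposition π j k) ≤ 2 := by
  have := bp_le_add_two_of_drop_one_swap (drop_one_eq_append (π := π) (by omega) hjk.le)
    (drop_one_prefixTransposition π j k)
  omega

/-- a prefix transposition removes at most two breakpoints. -/
theorem prefixTransposition_removes_at_most_two_breakpoints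
    (n : ℕ) (π : List ℕ) (hπ : IsPerm n π)
    (j k : ℕ) (hj : 2 ≤ j) (hjk : j < k) (hk : k ≤ n + 1) :
    bp π - bp (prefixTransposition π j k) ≤ 2 :=
  prefixTransposition_removes_at_most_two_breakpoints_general π j k hj hjk
end

section
/- For every permutation π, the prefix reversal and prefix transposition distance satisfies d_RT(π) ≥ ⌊b(π)/2⌋; equivalently, every sequence of prefix reversals and prefix transpositions transforming π into the identity permutation has length at least ⌊b(π)/2⌋. -/
/-
Every breakpoint count is taken on the tail `π₁, …, π_{n+1}`, where all three prefix
operations act by cutting the tail into blocks `A ++ B ++ C` and regluing them as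
`B ++ A ++ C` or `B ++ A.reverse ++ C` (a prefix reversal is the case `B = []`).
Breakpoints inside a block survive (reversal preserves them), and only the two junctions
`A|B`, `B|C` are lost, so one operation removes at most two breakpoints. Since the identity
has `b = 1`, a sorting sequence of length `ℓ` forces `b(π) ≤ 1 + 2ℓ`.
-/

def breaks (l : List ℕ) : ℕ :=
  (l.zip l.tail).countP fun p => !(p.1 + 1 == p.2 || p.2 + 1 == p.1)

theorem bp_eq_one_add_breaks_drop_one (π : List ℕ) : bp π = 1 + breaks (π.drop 1) := by
  rw [breaks, List.tail_drop]
  rfl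

@[simp]
theorem breaks_nil : breaks [] = 0 := rfl

@[simp]
theorem breaks_singleton (a : ℕ) : breaks [a] = 0 := rfl

theorem breaks_cons_cons (a b : ℕ) (l : List ℕ) :
    breaks (a :: b :: l) = (if a + 1 = b ∨ b + 1 = a then 0 else 1) + breaks (b :: l) := by
  simp only [breaks, List.tail_cons, List.zip_cons_cons, List.countP_cons]
  split_ifs <;> simp_all [Nat.add_comm]

theorem breaks_pair_comm (a b : ℕ) : breaks [a, b] = breaks [b, a] := by
  simp only [breaks_cons_cons, breaks_singleton, or_comm]

theorem breaks_append_cons (A : List ℕ) (a : ℕ) (l : List ℕ) :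
    breaks (A ++ a :: l) = breaks (A ++ [a]) + breaks (a :: l) := by
  match A with
  | [] => simp
  | [x] => simp [breaks_cons_cons]
  | x :: y :: A =>
    simp only [List.cons_append, breaks_cons_cons]
    rw [← List.cons_append, breaks_append_cons (y :: A) a l, List.cons_append]
    omega

theorem breaks_reverse (l : List ℕ) : breaks l.reverse = breaks l := by
  induction l with
  | nil => rfl
  | cons a l ih =>
    rcases l with _ | ⟨b, l⟩
    · rfl
    · rw [List.reverse_cons, List.reverse_cons, List.append_assoc, List.singleton_append,
        breaks_append_cons, ← List.reverse_cons, ih, breaks_pair_comm, breaks_cons_cons,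
        breaks_cons_cons a]
      simp only [breaks_singleton]
      omega

theorem breaks_append_bounds (A B : List ℕ) :
    breaks A + breaks B ≤ breaks (A ++ B) ∧ breaks (A ++ B) ≤ breaks A + breaks B + 1 := by
  rcases List.eq_nil_or_concat' A with rfl | ⟨A, a, rfl⟩
  · simp
  rcases B with _ | ⟨b, B⟩
  · simp
  rw [List.append_assoc, List.singleton_append, breaks_append_cons A a (b :: B), breaks_cons_cons]
  split_ifs <;> omega

theorem le_breaks_append (A B : List ℕ) : breaks A + breaks B ≤ breaks (A ++ B) :=
  (breaks_append_bounds A B).1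

theorem breaks_append_le (A B : List ℕ) : breaks (A ++ B) ≤ breaks A + breaks B + 1 :=
  (breaks_append_bounds A B).2

theorem breaks_le_breaks_swap_add_two (A A' B C : List ℕ) (hA : breaks A' = breaks A) :
    breaks (A ++ B ++ C) ≤ breaks (B ++ A' ++ C) + 2 := by
  have hsplit := breaks_append_le A (B ++ C)
  have hBC := breaks_append_le B C
  have hglue := le_breaks_append (B ++ A') C
  have hBA := le_breaks_append B A'
  rw [List.append_assoc]
  omega

theorem breaks_range' (s m : ℕ) : breaks (List.range' s m) = 0 := by
  induction m generalizing s with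
  | zero => rfl
  | succ m ih =>
    rcases m with _ | m
    · rfl
    · rw [List.range'_succ, List.range'_succ, breaks_cons_cons, ← List.range'_succ, ih]
      simp

theorem bp_range (m : ℕ) : bp (List.range m) = 1 := by
  rw [bp_eq_one_add_breaks_drop_one, List.range_eq_range', List.drop_range', breaks_range']

theorem prefixReversal_eq_prefixTransreversal (π : List ℕ) (j : ℕ) :
    prefixReversal π j = prefixTransreversal π j j := by
  simp [prefixReversal, prefixTransreversal]

section blocks

variable (a : ℕ) (t : List ℕ) (i m : ℕ)

theorem take_append_take_drop_append_drop :
    t.take i ++ (t.drop i).take m ++ t.drop (i + m) = t := by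
  rw [List.append_assoc, ← List.drop_drop, List.take_append_drop, List.take_append_drop]

theorem prefixTransposition_cons :
    prefixTransposition (a :: t) (i + 1) (i + 1 + m) =
      a :: ((t.drop i).take m ++ t.take i ++ t.drop (i + m)) := by
  simp [prefixTransposition, Nat.add_right_comm i 1 m]

theorem prefixTransreversal_cons :
    prefixTransreversal (a :: t) (i + 1) (i + 1 + m) =
      a :: ((t.drop i).take m ++ (t.take i).reverse ++ t.drop (i + m)) := by
  simp [prefixTransreversal, Nat.add_right_comm i 1 m]

end blocks

theorem bp_cons_le_bp_cons_swap_add_two (a : ℕ) (A A' B C : List ℕ)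
    (hA : breaks A' = breaks A) : bp (a :: (A ++ B ++ C)) ≤ bp (a :: (B ++ A' ++ C)) + 2 := by
  have := breaks_le_breaks_swap_add_two A A' B C hA
  simp only [bp_eq_one_add_breaks_drop_one, List.drop_one, List.tail_cons]
  omega

theorem bp_le_bp_prefixTransposition_add_two (π : List ℕ) {j k : ℕ} (hj : 1 ≤ j)
    (hjk : j ≤ k) : bp π ≤ bp (prefixTransposition π j k) + 2 := by
  obtain ⟨i, rfl⟩ : ∃ i, j = i + 1 := ⟨j - 1, by omega⟩
  obtain ⟨m, rfl⟩ : ∃ m, k = i + 1 + m := ⟨k - (i + 1), by omega⟩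
  rcases π with _ | ⟨a, t⟩
  · simp [bp]
  rw [prefixTransposition_cons]
  conv_lhs => rw [← take_append_take_drop_append_drop t i m]
  exact bp_cons_le_bp_cons_swap_add_two a _ _ _ _ rfl

theorem bp_le_bp_prefixTransreversal_add_two (π : List ℕ) {j k : ℕ} (hj : 1 ≤ j)
    (hjk : j ≤ k) : bp π ≤ bp (prefixTransreversal π j k) + 2 := by
  obtain ⟨i, rfl⟩ : ∃ i, j = i + 1 := ⟨j - 1, by omega⟩
  obtain ⟨m, rfl⟩ : ∃ m, k = i + 1 + m := ⟨k - (i + 1), by omega⟩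
  rcases π with _ | ⟨a, t⟩
  · simp [bp]
  rw [prefixTransreversal_cons]
  conv_lhs => rw [← take_append_take_drop_append_drop t i m]
  exact bp_cons_le_bp_cons_swap_add_two a _ _ _ _ (breaks_reverse _)

theorem PrefOp.bp_le_bp_apply_add_two {n : ℕ} {o : PrefOp} (ho : o.Valid n) (π : List ℕ) :
    bp π ≤ bp (o.apply π) + 2 := by
  match o, ho with
  | .rev j, ⟨hj, _⟩ =>
    rw [PrefOp.apply, prefixReversal_eq_prefixTransreversal]
    exact bp_le_bp_prefixTransreversal_add_two π (by omega) le_rfl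
  | .trans j k, ⟨hj, hjk, _⟩ => exact bp_le_bp_prefixTransposition_add_two π (by omega) hjk.le
  | .transrev j k, ⟨hj, hjk, _⟩ =>
    exact bp_le_bp_prefixTransreversal_add_two π (by omega) hjk.le

theorem bp_le_bp_applySeq_add_two_mul_length {n : ℕ} {ops : List PrefOp}
    (hval : ValidSeq n ops) (π : List ℕ) : bp π ≤ bp (applySeq π ops) + 2 * ops.length := by
  induction ops generalizing π with
  | nil => simp [applySeq]
  | cons o ops ih =>
    have hstep := PrefOp.bp_le_bp_apply_add_two (hval o List.mem_cons_self) π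
    have hrest := ih (fun o' ho' => hval o' (List.mem_cons_of_mem o ho')) (o.apply π)
    rw [applySeq, List.length_cons]
    omega

theorem sortRT_length_lower_bound_general
    (n : ℕ) (π : List ℕ)
    (ops : List PrefOp) (hval : ValidSeq n ops)
    (hsort : applySeq π ops = List.range (n + 2)) :
    bp π / 2 ≤ ops.length := by
  have h := bp_le_bp_applySeq_add_two_mul_length hval π
  rw [hsort, bp_range] at h
  omega

/-- every sequence of prefix reversals and prefix transpositions
sorting `π` has length at least `⌊b(π)/2⌋`. -/
theorem sortRT_length_lower_bound
    (n : ℕ) (π : List ℕ) (hπ : IsPerm n π)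
    (ops : List PrefOp) (hval : ValidSeq n ops)
    (hkind : ∀ o ∈ ops, o.isTransrev = false)
    (hsort : applySeq π ops = List.range (n + 2)) :
    bp π / 2 ≤ ops.length :=
  sortRT_length_lower_bound_general n π ops hval hsort
end

section
/- (Trapped black edge) Let π = [π_0, π_1, …, π_{n+1}] be a permutation and let j be an index with 3 ≤ j ≤ n+1 such that |π_1 − π_j| = 1. Then there exists an index i with 2 ≤ i ≤ j such that |π_i − π_{i−1}| ≠ 1 (i.e., there is a breakpoint strictly inside the segment from position 1 to position j). -/
/-! Without breakpoints, `π₁, …, π_j` is a walk on `ℤ` with unit steps through distinct values.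
Such a walk never turns back, since that would revisit the value two steps earlier; so it is
monotone, `|π_j - π₁| = j - 1 ≥ 2`, and `π₁`, `π_j` cannot be adjacent. -/

theorem Int.eq_add_of_injOn_of_abs_sub_succ_eq_one {f : ℕ → ℤ} {a b : ℕ}
    (hinj : Set.InjOn f (Set.Icc a b)) (hstep : ∀ i, a ≤ i → i < b → |f (i + 1) - f i| = 1)
    (hup : f (a + 1) = f a + 1) : ∀ i, a ≤ i → i ≤ b → f i = f a + (i - a) := by
  have hsucc : ∀ k, a + k < b → f (a + k + 1) = f (a + k) + 1 := by
    intro k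
    induction k with
    | zero => simpa using fun _ => hup
    | succ k ih =>
      intro hk
      rw [← add_assoc]
      have hprev := ih (by omega)
      rcases abs_eq (zero_le_one' ℤ) |>.1 (hstep (a + k + 1) (by omega) hk) with hforward | hback
      · omega
      · have hrevisit : a + k + 1 + 1 = a + k :=
          hinj ⟨by omega, by omega⟩ ⟨by omega, by omega⟩ (by omega)
        omega
  intro i hai hib
  obtain ⟨k, rfl⟩ := Nat.exists_eq_add_of_le hai
  induction k with
  | zero => simp
  | succ k ih =>
    rw [← add_assoc, hsucc k (by omega), ih (by omega) (by omega)]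
    push_cast
    ring

theorem Int.abs_sub_eq_of_injOn_of_abs_sub_succ_eq_one {f : ℕ → ℤ} {a b : ℕ} (hab : a ≤ b)
    (hinj : Set.InjOn f (Set.Icc a b)) (hstep : ∀ i, a ≤ i → i < b → |f (i + 1) - f i| = 1) :
    |f b - f a| = b - a := by
  rcases hab.eq_or_lt with rfl | hlt
  · simp
  rcases abs_eq (zero_le_one' ℤ) |>.1 (hstep a le_rfl hlt) with hup | hdown
  · have hprog := eq_add_of_injOn_of_abs_sub_succ_eq_one hinj hstep (by omega) b hab le_rfl
    rw [hprog, abs_of_nonneg] <;> omega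
  · have hneg := eq_add_of_injOn_of_abs_sub_succ_eq_one (f := fun i => -f i)
      (fun x hx y hy h => hinj hx hy (neg_inj.1 h))
      (fun i h1 h2 => by rw [← abs_neg]; convert hstep i h1 h2 using 2; ring)
      (by omega) b hab le_rfl
    rw [abs_of_nonpos] <;> omega

theorem Nat.adjacent_iff_abs_sub_eq_one {x y : ℕ} :
    x + 1 = y ∨ y + 1 = x ↔ |(y : ℤ) - x| = 1 := by
  rw [abs_eq (zero_le_one' ℤ)]
  omega

theorem List.Nodup.injOn_getD {α : Type*} {l : List α} (hl : l.Nodup) (d : α) :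
    Set.InjOn (l.getD · d) (Set.Iio l.length) := by
  intro x hx y hy hxy
  simp only [List.getD_eq_getElem _ _ hx, List.getD_eq_getElem _ _ hy] at hxy
  exact (hl.getElem_inj_iff).1 hxy

/-- trapped black edge: if `|π₁ − π_j| = 1` for some
`3 ≤ j ≤ n+1`, then there is a breakpoint strictly inside the segment from
position `1` to position `j`. -/
theorem trapped_black_edge
    (n : ℕ) (π : List ℕ) (hπ : IsPerm n π)
    (j : ℕ) (hj1 : 3 ≤ j) (hj2 : j ≤ n + 1)
    (hgrey : π.getD 1 0 + 1 = π.getD j 0 ∨ π.getD j 0 + 1 = π.getD 1 0) :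
    ∃ i, 2 ≤ i ∧ i ≤ j ∧
      ¬(π.getD (i - 1) 0 + 1 = π.getD i 0 ∨ π.getD i 0 + 1 = π.getD (i - 1) 0) := by
  by_contra! hnone
  have hlen : π.length = n + 2 := by simpa using hπ.1.length_eq
  have hinj : Set.InjOn (fun i => (π.getD i 0 : ℤ)) (Set.Icc 1 j) := fun x hx y hy h =>
    (hπ.1.nodup_iff.2 List.nodup_range).injOn_getD 0
      (show x < π.length by have := hx.2; omega) (show y < π.length by have := hy.2; omega)
      (Nat.cast_injective h)
  have hwalk := Int.abs_sub_eq_of_injOn_of_abs_sub_succ_eq_one (by omega) hinj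
    fun i h1 h2 => Nat.adjacent_iff_abs_sub_eq_one.1 (hnone (i + 1) (by omega) (by omega))
  have hends := Nat.adjacent_iff_abs_sub_eq_one.1 hgrey
  omega
end

section
/- Let π = [π_0, π_1, …, π_{n+1}] be a permutation that is not the identity permutation and satisfies π_1 = 1. Then there exist three operations o_1, o_2, o_3, each a prefix reversal or a prefix transposition, with o_1 a prefix reversal, such that b(((π·o_1)·o_2)·o_3) ≤ b(π) − 2, i.e., the three operations together remove at least two breakpoints. -/
/-!
Write `π = 0 :: t`. The pair `(π₀, π₁)` is never counted, so reversing a prefix `P` of `t` only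
trades the pair `(last P, next)` for `(head P, next)`, and a prefix transposition trades two
boundary pairs for two others.

If `t` starts with `x ≠ 1`, let `S` be the maximal run of consecutive values at its front and `w`
the neighbour `x ∓ 1` of `x` lying behind it, with left neighbour `z`. If `(z, w)` is a breakpoint,
reversing everything up to `z` removes it; otherwise the two neighbours of `w` are `x` and `z`, so
`w` is followed by a breakpoint and moving `S` right behind `w` removes one. The new tail starts
with `z` or with the element following `S`.

If `t` starts with `1` and is not sorted, a first reversal creating no breakpoint produces this
situation with neither candidate for the new first element equal to `1`: it turns around the
initial run `1 … q` when `q ≥ 2`, and otherwise `1 J 2 … r` up to the end of the run starting at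
`2`. Two more operations then remove two breakpoints. When `r = 2` (where `J` may end in `3`),
reversing `1 J 2` and then `2 Jᴿ` instead joins `2, 1` and leaves `J` in front, and a third
operation removes a second breakpoint.
-/

namespace PrefixSorting

def brk (a b : ℕ) : ℕ := if a + 1 = b ∨ b + 1 = a then 0 else 1

theorem brk_eq_zero_iff {a b : ℕ} : brk a b = 0 ↔ a + 1 = b ∨ b + 1 = a := by
  grind [brk]

theorem brk_eq_one_iff {a b : ℕ} : brk a b = 1 ↔ a + 1 ≠ b ∧ b + 1 ≠ a := by
  grind [brk]

theorem brk_le_one (a b : ℕ) : brk a b ≤ 1 := by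
  unfold brk; split_ifs <;> omega

theorem brk_comm (a b : ℕ) : brk a b = brk b a := by
  simp only [brk, or_comm]

def brks : List ℕ → ℕ
  | a :: b :: l => brk a b + brks (b :: l)
  | _ => 0

theorem countP_zip_tail_eq_brks : ∀ l : List ℕ,
    (l.zip l.tail).countP (fun p => !(p.1 + 1 == p.2 || p.2 + 1 == p.1)) = brks l
  | [] | [_] => rfl
  | a :: b :: l => by
    have ih := countP_zip_tail_eq_brks (b :: l)
    rw [List.tail_cons] at ih
    rw [List.tail_cons, List.zip_cons_cons, List.countP_cons, ih, brks, add_comm]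
    congr 1
    unfold brk
    split_ifs <;> simp_all

theorem bp_zero_cons (t : List ℕ) : bp (0 :: t) = 1 + brks t := by
  rw [bp, List.drop_one, List.tail_cons, List.drop_succ_cons, List.drop_one,
    countP_zip_tail_eq_brks]

theorem brks_append : ∀ {A B : List ℕ} {a b : ℕ}, A.getLast? = some a → B.head? = some b →
    brks (A ++ B) = brks A + brk a b + brks B
  | [a'], b' :: B, a, b, ha, hb => by
    simp only [List.getLast?_singleton, Option.some.injEq, List.head?_cons] at ha hb
    subst ha hb
    simp [brks]
  | a₁ :: a₂ :: A, B, a, b, ha, hb => by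
    rw [List.getLast?_cons_cons] at ha
    rw [List.cons_append, List.cons_append, brks, ← List.cons_append, brks_append ha hb, brks]
    omega

theorem brks_reverse : ∀ l : List ℕ, brks l.reverse = brks l
  | [] | [_] => rfl
  | a :: b :: l => by
    rw [List.reverse_cons, brks_append (a := b) (by simp) rfl, brks_reverse (b :: l), brks,
      brk_comm]
    simp only [brks]
    omega

theorem brks_reverse_append {P C : List ℕ} {p z c : ℕ} (hp : P.head? = some p)
    (hz : P.getLast? = some z) (hc : C.head? = some c) :
    brks (P.reverse ++ C) + brk z c = brks (P ++ C) + brk p c := by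
  rw [brks_append (by rwa [List.getLast?_reverse]) hc, brks_append hz hc, brks_reverse]
  omega

theorem brks_reverse_append_le {P C : List ℕ} {p z c : ℕ} (hp : P.head? = some p)
    (hz : P.getLast? = some z) (hc : C.head? = some c) (hzc : brk z c = 1) :
    brks (P.reverse ++ C) ≤ brks (P ++ C) := by
  have := brks_reverse_append hp hz hc
  have := brk_le_one p c
  omega

theorem brks_swap {S B C : List ℕ} {x y d w c : ℕ} (hx : S.head? = some x)
    (hy : S.getLast? = some y) (hd : B.head? = some d) (hw : B.getLast? = some w)
    (hc : C.head? = some c) :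
    brks (B ++ (S ++ C)) + brk y d + brk w c = brks (S ++ (B ++ C)) + brk w x + brk y c := by
  rw [brks_append (b := x) hw (by simp [hx]), brks_append hy hc,
    brks_append (b := d) hy (by simp [hd]), brks_append hw hc]
  omega

theorem exists_range'_append (x : ℕ) (l : List ℕ) :
    ∃ k D, x :: l = List.range' x (k + 1) ++ D ∧ D.head? ≠ some (x + k + 1) := by
  induction l generalizing x with
  | nil => exact ⟨0, [], rfl, by simp⟩
  | cons b r ih =>
    by_cases hb : b = x + 1
    · obtain ⟨k, D, hsplit, hD⟩ := ih b
      subst hb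
      refine ⟨k + 1, D, by rw [hsplit, List.range'_succ (n := k + 1)]; rfl, ?_⟩
      rwa [show x + (k + 1) + 1 = x + 1 + k + 1 by omega]
    · exact ⟨0, b :: r, rfl, by simpa using hb⟩

theorem exists_reverse_range'_append (x : ℕ) (l : List ℕ) :
    ∃ a k D, a + k = x ∧ x :: l = (List.range' a (k + 1)).reverse ++ D ∧
      ∀ d ∈ D.head?, d + 1 ≠ a := by
  induction l generalizing x with
  | nil => exact ⟨x, 0, [], rfl, rfl, by simp⟩
  | cons b r ih =>
    by_cases hb : b + 1 = x
    · obtain ⟨a, k, D, rfl, hsplit, hD⟩ := ih b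
      refine ⟨a, k + 1, D, by omega, ?_, hD⟩
      rw [hsplit, List.range'_concat (n := k + 1), List.reverse_append]
      simp [← hb, Nat.add_assoc]
    · exact ⟨x, 0, b :: r, by omega, rfl, by simpa using hb⟩

theorem ne_of_nodup_append {α : Type*} {S D : List α} (h : (S ++ D).Nodup) {a b : α}
    (ha : a ∈ S) (hb : b ∈ D) : a ≠ b :=
  (List.nodup_append.mp h).2.2 a ha b hb

theorem ne_append_cons_cons {α : Type*} {L M : List α} {a c : α} (hnd : (L ++ a :: M).Nodup)
    (hM : M.head? ≠ some c) (L' Q : List α) : L ++ a :: M ≠ L' ++ a :: c :: Q := by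
  intro h
  have haL : a ∉ L := fun ha => ne_of_nodup_append hnd ha List.mem_cons_self rfl
  have haM : a ∉ M := (List.nodup_cons.mp (List.nodup_append.mp hnd).2.1).1
  obtain ⟨-, -, rfl⟩ := (List.append_cons_inj_of_notMem haL haM).mp h
  exact hM rfl

def revOp (P : List ℕ) : PrefOp := .rev (P.length + 1)

def transOp (S B : List ℕ) : PrefOp := .trans (S.length + 1) (S.length + B.length + 1)

theorem revOp_apply (a : ℕ) (P C : List ℕ) :
    (revOp P).apply (a :: (P ++ C)) = a :: (P.reverse ++ C) := by
  simp [revOp, PrefOp.apply, prefixReversal]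

theorem transOp_apply (a : ℕ) (S B C : List ℕ) :
    (transOp S B).apply (a :: (S ++ (B ++ C))) = a :: (B ++ (S ++ C)) := by
  simp [transOp, PrefOp.apply, prefixTransposition, List.drop_append, List.take_append]

theorem revOp_valid {n : ℕ} {P C : List ℕ} (hP : 2 ≤ P.length) (hC : C ≠ [])
    (hlen : (P ++ C).length = n + 1) : (revOp P).Valid n := by
  have := List.length_pos_iff.mpr hC
  simp only [revOp, PrefOp.Valid, List.length_append] at *
  omega

def Step (n : ℕ) (t t' : List ℕ) : Prop :=
  ∃ o : PrefOp, o.Valid n ∧ o.isTransrev = false ∧ o.apply (0 :: t) = 0 :: t'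

def ReducesByTwo (n : ℕ) (t : List ℕ) : Prop :=
  ∃ t₁ t₂, Step n t t₁ ∧ Step n t₁ t₂ ∧ brks t₂ + 2 ≤ brks t

def ReducesByTwoAfterReversal (n : ℕ) (t : List ℕ) : Prop :=
  ∃ P C, t = P ++ C ∧ (revOp P).Valid n ∧ brks (P.reverse ++ C) ≤ brks t ∧
    ReducesByTwo n (P.reverse ++ C)

theorem step_reverse_append {n : ℕ} {P C : List ℕ} (hP : 2 ≤ P.length) (hC : C ≠ [])
    (hlen : (P ++ C).length = n + 1) : Step n (P ++ C) (P.reverse ++ C) :=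
  ⟨revOp P, revOp_valid hP hC hlen, rfl, revOp_apply 0 P C⟩

theorem step_swap {n : ℕ} {S B C : List ℕ} (hS : S ≠ []) (hB : B ≠ []) (hC : C ≠ [])
    (hlen : (S ++ (B ++ C)).length = n + 1) : Step n (S ++ (B ++ C)) (B ++ (S ++ C)) := by
  refine ⟨transOp S B, ?_, rfl, transOp_apply 0 S B C⟩
  have := List.length_pos_iff.mpr hS
  have := List.length_pos_iff.mpr hB
  have := List.length_pos_iff.mpr hC
  simp only [transOp, PrefOp.Valid, List.length_append] at *
  omega

def IsTail (n : ℕ) (t : List ℕ) : Prop :=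
  t.Perm (List.range' 1 (n + 1)) ∧ t.getLast? = some (n + 1)

theorem isTail_of_isPerm {n : ℕ} {π : List ℕ} (h : IsPerm n π) : ∃ t, π = 0 :: t ∧ IsTail n t := by
  obtain ⟨hperm, h0, hlast⟩ := h
  have hrange : List.range (n + 2) = 0 :: List.range' 1 (n + 1) := by
    rw [List.range_eq_range', List.range'_succ]
  rw [hrange] at hperm
  obtain ⟨a, t, rfl⟩ := List.exists_cons_of_length_pos (by simp [hperm.length_eq] : 0 < π.length)
  obtain rfl : a = 0 := h0
  have htail := hperm.cons_inv
  refine ⟨t, rfl, htail, ?_⟩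
  have hlen : t.length = n + 1 := by rw [htail.length_eq, List.length_range']
  rw [List.getLast?_eq_getElem?, hlen, Nat.add_sub_cancel, ← hlast, List.getD_cons_succ,
    List.getD_eq_getElem?_getD, List.getElem?_eq_getElem (by omega)]
  rfl

namespace IsTail

variable {n : ℕ}

theorem nodup {t : List ℕ} (ht : IsTail n t) : t.Nodup :=
  ht.1.nodup_iff.mpr List.nodup_range'

theorem mem_iff {t : List ℕ} (ht : IsTail n t) {a : ℕ} : a ∈ t ↔ 1 ≤ a ∧ a ≤ n + 1 := by
  rw [ht.1.mem_iff, List.mem_range'_1]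
  omega

theorem length_eq {t : List ℕ} (ht : IsTail n t) : t.length = n + 1 := by
  rw [ht.1.length_eq, List.length_range']

theorem reverse_append {P C : List ℕ} (ht : IsTail n (P ++ C)) (hC : C ≠ []) :
    IsTail n (P.reverse ++ C) :=
  ⟨((List.reverse_perm P).append_right C).trans ht.1, by
    rw [List.getLast?_append_of_ne_nil _ hC, ← ht.2, List.getLast?_append_of_ne_nil _ hC]⟩

theorem swap {S B C : List ℕ} (ht : IsTail n (S ++ (B ++ C))) (hC : C ≠ []) :
    IsTail n (B ++ (S ++ C)) := by
  refine ⟨?_, ?_⟩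
  · simpa only [List.append_assoc] using (List.perm_append_comm.append_right C).trans
      (by simpa only [List.append_assoc] using ht.1)
  · rw [List.getLast?_append_of_ne_nil _ (by simp [hC]), List.getLast?_append_of_ne_nil _ hC,
      ← ht.2, List.getLast?_append_of_ne_nil _ (by simp [hC]),
      List.getLast?_append_of_ne_nil _ hC]

theorem mem_right {S D : List ℕ} (ht : IsTail n (S ++ D)) {w : ℕ} (h1 : 1 ≤ w)
    (hn : w ≤ n + 1) (hS : w ∉ S) : w ∈ D :=
  (List.mem_append.mp (ht.mem_iff.mpr ⟨h1, hn⟩)).resolve_left hS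

theorem getLast?_right {S D : List ℕ} (ht : IsTail n (S ++ D)) (hD : D ≠ []) :
    D.getLast? = some (n + 1) := by
  rw [← ht.2, List.getLast?_append_of_ne_nil _ hD]

theorem exists_strip_of_descending {x : ℕ} {u : List ℕ} (ht : IsTail n (x :: u))
    (hdesc : u.head? = some (x - 1)) (hx : 2 ≤ x) :
    ∃ S D y d w, x :: u = S ++ D ∧ S.head? = some x ∧ S.getLast? = some y ∧
      D.head? = some d ∧ brk y d = 1 ∧ w ∈ D ∧ brk x w = 0 := by
  have hxb := ht.mem_iff.mp List.mem_cons_self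
  obtain ⟨a, k, D, hak, hsplit, hD⟩ := exists_reverse_range'_append x u
  have hk : 1 ≤ k := by
    by_contra hk0
    obtain rfl : k = 0 := by omega
    obtain rfl : u = D := (by simpa using hsplit : x = a ∧ u = D).2
    exact hD _ hdesc (by omega)
  rw [hsplit] at ht ⊢
  have hS : ∀ s, s ∈ (List.range' a (k + 1)).reverse ↔ a ≤ s ∧ s ≤ x := by
    intro s; rw [List.mem_reverse, List.mem_range'_1]; omega
  obtain ⟨d, D, rfl⟩ : ∃ d D', D = d :: D' := List.exists_cons_of_ne_nil fun hD => by
    subst hD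
    have := ht.2
    simp only [List.append_nil, List.getLast?_reverse, List.range'_succ, List.head?_cons,
      Option.some.injEq] at this
    omega
  have hlast := List.mem_of_getLast? (ht.getLast?_right (List.cons_ne_nil d D))
  have hxn := ne_of_nodup_append ht.nodup ((hS x).mpr ⟨by omega, le_rfl⟩) hlast
  refine ⟨_, _, a, d, x + 1, rfl, by simp [List.head?_reverse, List.getLast?_range', hak],
    by simp [List.getLast?_reverse, List.range'_succ], rfl, brk_eq_one_iff.mpr ⟨?_, hD d rfl⟩,
    ht.mem_right (by omega) (by omega) (by rw [hS]; omega), brk_eq_zero_iff.mpr (Or.inl rfl)⟩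
  exact ne_of_nodup_append ht.nodup ((hS (a + 1)).mpr ⟨by omega, by omega⟩) List.mem_cons_self

theorem exists_strip_of_not_descending {x : ℕ} {u : List ℕ} (ht : IsTail n (x :: u))
    (hdesc : u.head? ≠ some (x - 1)) (hx : 2 ≤ x) :
    ∃ S D y d w, x :: u = S ++ D ∧ S.head? = some x ∧ S.getLast? = some y ∧
      D.head? = some d ∧ brk y d = 1 ∧ w ∈ D ∧ brk x w = 0 := by
  obtain ⟨k, D, hsplit, hD⟩ := exists_range'_append x u
  rw [hsplit] at ht ⊢
  have hS : ∀ s, s ∈ List.range' x (k + 1) ↔ x ≤ s ∧ s ≤ x + k := by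
    intro s; rw [List.mem_range'_1]; omega
  obtain ⟨d, D, rfl⟩ : ∃ d D', D = d :: D' := List.exists_cons_of_ne_nil fun hD => by
    subst hD
    rw [List.append_nil] at ht
    have := (hS 1).mp (ht.mem_iff.mpr ⟨le_rfl, by omega⟩)
    omega
  have hxb := ht.mem_iff.mp (List.mem_append_left _ ((hS x).mpr ⟨le_rfl, by omega⟩))
  refine ⟨_, _, x + k, d, x - 1, rfl, by simp [List.range'_succ], by simp [List.getLast?_range'],
    rfl, brk_eq_one_iff.mpr ⟨fun h => hD (by rw [← h]; rfl), ?_⟩,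
    ht.mem_right (by omega) (by omega) (by rw [hS]; omega), brk_eq_zero_iff.mpr (by omega)⟩
  rcases Nat.eq_zero_or_pos k with rfl | hk
  · obtain rfl : u = d :: D := by simpa using hsplit
    simp only [List.head?_cons, ne_eq, Option.some.injEq] at hdesc
    omega
  · exact (ne_of_nodup_append ht.nodup ((hS (x + k - 1)).mpr ⟨by omega, by omega⟩)
      List.mem_cons_self).symm ∘ by omega

theorem exists_strip {x : ℕ} {u : List ℕ} (ht : IsTail n (x :: u)) (hx : x ≠ 1) :
    ∃ S D y d w, x :: u = S ++ D ∧ S.head? = some x ∧ S.getLast? = some y ∧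
      D.head? = some d ∧ brk y d = 1 ∧ w ∈ D ∧ brk x w = 0 := by
  have hx2 : 2 ≤ x := by have := ht.mem_iff.mp List.mem_cons_self; omega
  by_cases hdesc : u.head? = some (x - 1)
  · exact ht.exists_strip_of_descending hdesc hx2
  · exact ht.exists_strip_of_not_descending hdesc hx2

theorem exists_step_reverse {P F : List ℕ} {p z w : ℕ} (ht : IsTail n (P ++ w :: F))
    (hp : P.head? = some p) (hz : P.getLast? = some z) (hpw : brk p w = 0)
    (hzw : brk z w = 1) :
    Step n (P ++ w :: F) (P.reverse ++ w :: F) ∧ IsTail n (P.reverse ++ w :: F) ∧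
      brks (P.reverse ++ w :: F) < brks (P ++ w :: F) := by
  have hP : 2 ≤ P.length := by
    obtain _ | ⟨a, _ | ⟨b, P⟩⟩ := P
    · simp at hp
    · simp only [List.head?_cons, List.getLast?_singleton, Option.some.injEq] at hp hz
      subst hp hz
      omega
    · simp
  have := brks_reverse_append hp hz (rfl : (w :: F).head? = some w)
  exact ⟨step_reverse_append hP (List.cons_ne_nil _ _) ht.length_eq,
    ht.reverse_append (List.cons_ne_nil _ _), by omega⟩

theorem exists_step_swap {S E F : List ℕ} {x y d z w : ℕ} (ht : IsTail n (S ++ (E ++ w :: F)))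
    (hx : S.head? = some x) (hy : S.getLast? = some y) (hd : E.head? = some d)
    (hz : E.getLast? = some z) (hyd : brk y d = 1) (hxw : brk x w = 0) (hzw : brk z w = 0) :
    Step n (S ++ (E ++ w :: F)) (E ++ w :: (S ++ F)) ∧ IsTail n (E ++ w :: (S ++ F)) ∧
      brks (E ++ w :: (S ++ F)) < brks (S ++ (E ++ w :: F)) := by
  have hxS := List.mem_of_head? hx
  have hzE := List.mem_of_getLast? hz
  have hxz := ne_of_nodup_append ht.nodup hxS (List.mem_append_left _ hzE)
  have hxb := ht.mem_iff.mp (List.mem_append_left _ hxS)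
  obtain ⟨f, F, rfl⟩ : ∃ f F', F = f :: F' := List.exists_cons_of_ne_nil fun hF => by
    subst hF
    have hw : w = n + 1 := by simpa using ht.2
    rw [brk_eq_zero_iff] at hxw hzw
    have hzb := ht.mem_iff.mp (List.mem_append_right _ (List.mem_append_left _ hzE))
    omega
  have hxf : x ≠ f := ne_of_nodup_append ht.nodup hxS (by simp)
  have hzf : z ≠ f := ne_of_nodup_append (List.nodup_append.mp ht.nodup).2.1 hzE (by simp)
  -- both neighbours of `w` are already taken by `x` and `z`
  have hwf : brk w f = 1 := by
    rw [brk_eq_zero_iff] at hxw hzw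
    rw [brk_eq_one_iff]
    omega
  have hbrks := brks_swap (B := E ++ [w]) (d := d) (w := w) hx hy (by simp [hd]) (by simp)
    (rfl : (f :: F).head? = some f)
  rw [brk_comm w x, hxw, hyd, hwf] at hbrks
  have := brk_le_one y f
  have hS : S ≠ [] := by rintro rfl; simp at hx
  rw [show E ++ w :: f :: F = (E ++ [w]) ++ f :: F by simp] at ht ⊢
  have hstep := step_swap hS (by simp) (List.cons_ne_nil _ _) ht.length_eq
  have htail := ht.swap (List.cons_ne_nil _ _)
  simp only [List.append_assoc, List.cons_append, List.nil_append] at hbrks hstep htail ⊢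
  exact ⟨hstep, htail, by omega⟩

theorem exists_step_of_strip {S D : List ℕ} {x y d w : ℕ} (ht : IsTail n (S ++ D))
    (hx : S.head? = some x) (hy : S.getLast? = some y) (hd : D.head? = some d)
    (hyd : brk y d = 1) (hw : w ∈ D) (hxw : brk x w = 0) :
    ∃ T, Step n (S ++ D) T ∧ IsTail n T ∧ brks T < brks (S ++ D) ∧
      (T.head? = some d ∨ ∃ L Q z, S ++ D = L ++ z :: w :: Q ∧ T.head? = some z) := by
  obtain ⟨E, F, rfl⟩ := List.append_of_mem hw
  have hS : S ≠ [] := by rintro rfl; simp at hx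
  obtain ⟨L, z, hLz⟩ : ∃ L z, S ++ E = L ++ [z] := by
    obtain h | ⟨L, z, h⟩ := List.eq_nil_or_concat (S ++ E)
    · simp [hS] at h
    · exact ⟨L, z, by simpa using h⟩
  have hassoc : S ++ (E ++ w :: F) = S ++ E ++ w :: F := (List.append_assoc _ _ _).symm
  by_cases hzw : brk z w = 1
  · rw [hassoc] at ht ⊢
    obtain ⟨hstep, htail, hlt⟩ := ht.exists_step_reverse (p := x) (by simp [hx])
      (by simp [hLz]) hxw hzw
    exact ⟨_, hstep, htail, hlt, Or.inr ⟨L, F, z, by simp [hLz], by simp [hLz]⟩⟩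
  · have hE : E ≠ [] := by
      rintro rfl
      rw [List.append_nil] at hLz
      obtain rfl : z = y := by simpa [hLz] using hy
      obtain rfl : w = d := by simpa using hd
      exact hzw hyd
    obtain ⟨hstep, htail, hlt⟩ := ht.exists_step_swap hx hy
      (by simpa [List.head?_append_of_ne_nil _ hE] using hd)
      (by rw [← List.getLast?_append_of_ne_nil S hE, hLz, List.getLast?_concat]) hyd hxw
      (by have := brk_le_one z w; omega)
    exact ⟨_, hstep, htail, hlt, Or.inl (by simpa [List.head?_append_of_ne_nil _ hE] using hd)⟩

theorem exists_step_of_head_ne_one {t : List ℕ} (ht : IsTail n t) (h1 : t.head? ≠ some 1) :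
    ∃ T, Step n t T ∧ brks T < brks t := by
  obtain ⟨x, u, rfl⟩ : ∃ x u, t = x :: u :=
    List.exists_cons_of_ne_nil (by rintro rfl; simpa using ht.2)
  obtain ⟨S, D, y, d, w, hsplit, hx, hy, hd, hyd, hw, hxw⟩ :=
    ht.exists_strip (by simpa using h1)
  rw [hsplit] at ht ⊢
  obtain ⟨T, hstep, -, hlt, -⟩ := ht.exists_step_of_strip hx hy hd hyd hw hxw
  exact ⟨T, hstep, hlt⟩

theorem reducesByTwo_of_step {t T : List ℕ} (hT : IsTail n T) (hstep : Step n t T)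
    (hlt : brks T < brks t) (h1 : T.head? ≠ some 1) : ReducesByTwo n t := by
  obtain ⟨T₂, hstep₂, hlt₂⟩ := hT.exists_step_of_head_ne_one h1
  exact ⟨T, T₂, hstep, hstep₂, by omega⟩

theorem reducesByTwo_of_strip {S D : List ℕ} {x y d w : ℕ} (ht : IsTail n (S ++ D))
    (hx : S.head? = some x) (hy : S.getLast? = some y) (hd : D.head? = some d)
    (hyd : brk y d = 1) (hw : w ∈ D) (hxw : brk x w = 0) (hd1 : d ≠ 1)
    (hw1 : ∀ L Q, S ++ D ≠ L ++ 1 :: w :: Q) : ReducesByTwo n (S ++ D) := by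
  obtain ⟨T, hstep, hT, hlt, hhead⟩ := ht.exists_step_of_strip hx hy hd hyd hw hxw
  refine hT.reducesByTwo_of_step hstep hlt ?_
  rcases hhead with h | ⟨L, Q, z, hLQ, h⟩
  · simpa [h] using hd1
  · rw [h]
    rintro ⟨⟩
    exact hw1 L Q hLQ

theorem reducesByTwoAfterReversal_of_range' {k v : ℕ} {R : List ℕ}
    (ht : IsTail n (List.range' 1 (k + 2) ++ v :: R)) (hv : v ≠ k + 3) :
    ReducesByTwoAfterReversal n (List.range' 1 (k + 2) ++ v :: R) := by
  have hP : ∀ a, a ∈ List.range' 1 (k + 2) ↔ 1 ≤ a ∧ a ≤ k + 2 := by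
    intro a; rw [List.mem_range'_1]; omega
  have hvb := ht.mem_iff.mp (List.mem_append_right _ List.mem_cons_self)
  have hv4 : k + 4 ≤ v := by
    by_contra
    exact ne_of_nodup_append ht.nodup ((hP v).mpr ⟨by omega, by omega⟩) List.mem_cons_self rfl
  have hrev : (List.range' 1 (k + 2)).reverse = (List.range' 2 (k + 1)).reverse ++ [1] := by
    simp [List.range'_succ]
  have hT := ht.reverse_append (List.cons_ne_nil _ _)
  refine ⟨_, _, rfl, revOp_valid (by simp) (List.cons_ne_nil _ _) ht.length_eq,
    brks_reverse_append_le (p := 1) (z := k + 2) (c := v) (by simp [List.range'_succ])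
      (by simp [List.getLast?_range']) rfl (brk_eq_one_iff.mpr ⟨by omega, by omega⟩),
    hT.reducesByTwo_of_strip (x := k + 2) (y := 1) (by simp [List.getLast?_range'])
      (by simp [List.range'_succ]) rfl (brk_eq_one_iff.mpr ⟨by omega, by omega⟩)
      (hT.mem_right (by omega) (by omega) (by rw [List.mem_reverse, hP]; omega))
      (brk_eq_zero_iff.mpr (Or.inl rfl)) (by omega) ?_⟩
  rw [hrev, List.append_assoc, List.singleton_append]
  exact ne_append_cons_cons (by simpa [hrev] using hT.nodup) (by simpa using hv)

theorem reducesByTwoAfterReversal_of_cons_two {J W : List ℕ} {c : ℕ} (hJ : J ≠ [])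
    (ht : IsTail n (1 :: (J ++ 2 :: c :: W))) (hc : c ≠ 3) :
    ReducesByTwoAfterReversal n (1 :: (J ++ 2 :: c :: W)) := by
  obtain ⟨v, J, rfl⟩ := List.exists_cons_of_ne_nil hJ
  have hcb := ht.mem_iff.mp (by simp : c ∈ _)
  have hvb := ht.mem_iff.mp (by simp : v ∈ _)
  have hnd := ht.nodup
  simp only [List.cons_append, List.nodup_cons, List.mem_cons, List.mem_append] at hnd
  rw [show 1 :: (v :: J ++ 2 :: c :: W) = (1 :: (v :: J ++ [2])) ++ c :: W by simp] at ht ⊢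
  have hT := ht.reverse_append (List.cons_ne_nil _ _)
  have hrev : (1 :: (v :: J ++ [2])).reverse ++ c :: W = (2 :: (v :: J).reverse) ++ 1 :: c :: W :=
    by simp
  refine ⟨_, _, rfl, revOp_valid (by simp) (List.cons_ne_nil _ _) ht.length_eq,
    brks_reverse_append_le (p := 1) (z := 2) (c := c) rfl
      (by rw [← List.cons_append, List.getLast?_concat]) rfl
      (brk_eq_one_iff.mpr ⟨by omega, by omega⟩), ?_⟩
  rw [hrev] at hT ⊢
  obtain ⟨hstep, hT₁, hlt⟩ := hT.exists_step_reverse (p := 2) (z := v) rfl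
    (by rw [List.reverse_cons, ← List.cons_append, List.getLast?_concat])
    (brk_eq_zero_iff.mpr (Or.inr rfl)) (brk_eq_one_iff.mpr ⟨by omega, by omega⟩)
  exact hT₁.reducesByTwo_of_step hstep hlt (by simpa using (by omega : v ≠ 1))

theorem reducesByTwoAfterReversal_of_cons_range' {J W : List ℕ} {k c : ℕ} (hJ : J ≠ [])
    (ht : IsTail n (1 :: (J ++ (List.range' 2 (k + 2) ++ c :: W)))) (hc : c ≠ k + 4) :
    ReducesByTwoAfterReversal n (1 :: (J ++ (List.range' 2 (k + 2) ++ c :: W))) := by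
  obtain ⟨J, z, rfl⟩ : ∃ J' z, J = J' ++ [z] := by
    obtain h | ⟨J', z, h⟩ := List.eq_nil_or_concat J
    · exact absurd h hJ
    · exact ⟨J', z, by simpa using h⟩
  have hrun : ∀ a, a ∈ List.range' 2 (k + 2) ↔ 2 ≤ a ∧ a ≤ k + 3 := by
    intro a; rw [List.mem_range'_1]; omega
  have hcb := ht.mem_iff.mp (by simp : c ∈ _)
  have hzb := ht.mem_iff.mp (by simp : z ∈ _)
  obtain ⟨h1, hnd⟩ := List.nodup_cons.mp ht.nodup
  have hc5 : k + 5 ≤ c := by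
    have hc1 : c ≠ 1 := by rintro rfl; exact h1 (by simp)
    by_contra
    exact ne_of_nodup_append (List.nodup_append.mp hnd).2.1 ((hrun c).mpr ⟨by omega, by omega⟩)
      List.mem_cons_self rfl
  have hz4 : k + 4 ≤ z := by
    have hz1 : z ≠ 1 := by rintro rfl; exact h1 (by simp)
    by_contra
    exact ne_of_nodup_append hnd (by simp) (List.mem_append_left _ ((hrun z).mpr
      ⟨by omega, by omega⟩)) rfl
  rw [show 1 :: (J ++ [z] ++ (List.range' 2 (k + 2) ++ c :: W))
    = (1 :: (J ++ [z] ++ List.range' 2 (k + 2))) ++ c :: W by simp] at ht ⊢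
  have hT := ht.reverse_append (List.cons_ne_nil _ _)
  have hrev : (1 :: (J ++ [z] ++ List.range' 2 (k + 2))).reverse ++ c :: W
      = (List.range' 2 (k + 2)).reverse ++ ((z :: J.reverse) ++ 1 :: c :: W) := by
    simp
  refine ⟨_, _, rfl, revOp_valid (by simp +arith) (List.cons_ne_nil _ _) ht.length_eq,
    brks_reverse_append_le (p := 1) (z := k + 3) (c := c) rfl
      (by simp +arith [List.getLast?_cons, List.getLast?_range']) rfl
      (brk_eq_one_iff.mpr ⟨by omega, by omega⟩), ?_⟩
  rw [hrev] at hT ⊢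
  refine hT.reducesByTwo_of_strip (x := k + 3) (y := 2) (w := k + 4)
    (by simp +arith [List.getLast?_range']) (by simp [List.range'_succ]) rfl
    (brk_eq_one_iff.mpr ⟨by omega, by omega⟩)
    (hT.mem_right (by omega) (by omega) (by rw [List.mem_reverse, hrun]; omega))
    (brk_eq_zero_iff.mpr (Or.inl rfl)) (by omega) ?_
  rw [← List.append_assoc]
  exact ne_append_cons_cons (List.append_assoc _ _ _ ▸ hT.nodup) (by simpa using hc)

theorem reducesByTwoAfterReversal_of_one_cons {v : ℕ} {R : List ℕ} (ht : IsTail n (1 :: v :: R))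
    (hv : v ≠ 2) : ReducesByTwoAfterReversal n (1 :: v :: R) := by
  have hlen := ht.length_eq
  simp only [List.length_cons] at hlen
  have h2 : 2 ∈ R := by
    simpa [hv.symm] using (ht.mem_iff (a := 2)).mpr ⟨by omega, by omega⟩
  obtain ⟨J, U, rfl⟩ := List.append_of_mem h2
  obtain ⟨k, W, hsplit, hW⟩ := exists_range'_append 2 U
  rw [← List.cons_append, hsplit] at ht ⊢
  obtain ⟨c, W, rfl⟩ : ∃ c W', W = c :: W' := List.exists_cons_of_ne_nil <| by
    rintro rfl
    have hlast := ht.2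
    have hlen := ht.length_eq
    rw [List.append_nil, ← List.cons_append, List.getLast?_append_of_ne_nil _ (by simp),
      List.getLast?_range', if_neg (Nat.succ_ne_zero k), Option.some.injEq] at hlast
    simp only [List.append_nil, List.length_cons, List.length_append, List.length_range'] at hlen
    omega
  cases k with
  | zero =>
    simp only [zero_add, List.range'_one, List.singleton_append] at ht hW ⊢
    exact ht.reducesByTwoAfterReversal_of_cons_two (List.cons_ne_nil _ _)
      (by rintro rfl; simp at hW)
  | succ k =>
    exact ht.reducesByTwoAfterReversal_of_cons_range' (List.cons_ne_nil _ _)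
      (by rintro rfl; simp +arith at hW)

theorem reducesByTwoAfterReversal_of_head_eq_one {u : List ℕ} (ht : IsTail n (1 :: u))
    (hne : 1 :: u ≠ List.range' 1 (n + 1)) : ReducesByTwoAfterReversal n (1 :: u) := by
  obtain ⟨k, D, hsplit, hD⟩ := exists_range'_append 1 u
  rw [hsplit] at ht hne ⊢
  obtain ⟨v, R, rfl⟩ : ∃ v R, D = v :: R := List.exists_cons_of_ne_nil <| by
    rintro rfl
    have hlen := ht.length_eq
    simp only [List.append_nil, List.length_range', Nat.add_right_cancel_iff] at hlen hne
    exact hne (hlen ▸ rfl)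
  cases k with
  | zero => exact ht.reducesByTwoAfterReversal_of_one_cons (by simpa using hD)
  | succ k => exact ht.reducesByTwoAfterReversal_of_range' (by rintro rfl; simp +arith at hD)

end IsTail

end PrefixSorting

/-- if `π` is not the identity and `π₁ = 1`, then there are three
operations (each a prefix reversal or a prefix transposition, the first a
prefix reversal) that together remove at least two breakpoints. -/
theorem three_ops_remove_two_breakpoints_of_first_eq_one
    (n : ℕ) (π : List ℕ) (hπ : IsPerm n π)
    (hid : π ≠ List.range (n + 2)) (h1 : π.getD 1 0 = 1) :
    ∃ o₁ o₂ o₃ : PrefOp,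
      o₁.Valid n ∧ o₂.Valid n ∧ o₃.Valid n ∧
      o₁.isRev = true ∧ o₂.isTransrev = false ∧ o₃.isTransrev = false ∧
      bp (o₃.apply (o₂.apply (o₁.apply π))) ≤ bp π - 2 := by
  obtain ⟨t, rfl, ht⟩ := PrefixSorting.isTail_of_isPerm hπ
  obtain ⟨u, rfl⟩ : ∃ u, t = 1 :: u := by
    obtain ⟨a, u, rfl⟩ := List.exists_cons_of_ne_nil (l := t) (by rintro rfl; simpa using ht.2)
    exact ⟨u, by simpa using h1⟩
  have hne : 1 :: u ≠ List.range' 1 (n + 1) := by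
    rintro h
    exact hid (by rw [h, List.range_eq_range']; rfl)
  obtain ⟨P, C, hPC, hvalid, hle, t₁, t₂, ⟨o₂, hv₂, ho₂, happ₂⟩, ⟨o₃, hv₃, ho₃, happ₃⟩, hlt⟩ :=
    ht.reducesByTwoAfterReversal_of_head_eq_one hne
  refine ⟨PrefixSorting.revOp P, o₂, o₃, hvalid, hv₂, hv₃, rfl, ho₂, ho₃, ?_⟩
  rw [hPC] at hle ⊢
  rw [PrefixSorting.revOp_apply, happ₂, happ₃, PrefixSorting.bp_zero_cons,
    PrefixSorting.bp_zero_cons]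
  omega
end

section
/- For every permutation π = [π_0, π_1, …, π_{n+1}] and every prefix transreversal βτ = βτ(1,j,k) with 2 ≤ j < k ≤ n+1, the number of breakpoints decreases by at most two, i.e., b(π) − b(π·βτ) ≤ 2. -/
/-!
Write the tail `π₁ … π_{n+1}` as `A ++ B ++ C` with `A = π₁ … π_{j-1}`, `B = π_j … π_{k-1}`,
`C = π_k … π_{n+1}`; the transreversal turns it into `B ++ A.reverse ++ C`. Breakpoints are
counted on adjacent pairs by a symmetric test, so reversing `A` keeps its internal breakpoints,
and concatenation keeps the breakpoints of the pieces and adds at most one at each junction.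
Hence only the two junctions `A | B` and `B | C` can be lost.
-/

section AdjacentCount

variable {α : Type*} (p : α × α → Bool)

def adjacentCount (l : List α) : ℕ :=
  (l.zip l.tail).countP p

@[simp]
lemma adjacentCount_nil : adjacentCount p [] = 0 := rfl

@[simp]
lemma adjacentCount_singleton (a : α) : adjacentCount p [a] = 0 := rfl

lemma adjacentCount_cons_cons (a b : α) (l : List α) :
    adjacentCount p (a :: b :: l) = adjacentCount p (b :: l) + if p (a, b) then 1 else 0 :=
  List.countP_cons

lemma adjacentCount_append_cons (l₁ : List α) (a : α) (l₂ : List α) :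
    adjacentCount p (l₁ ++ a :: l₂) = adjacentCount p (l₁ ++ [a]) + adjacentCount p (a :: l₂) := by
  induction l₁ with
  | nil => simp
  | cons x l₁ ih =>
    cases l₁ with
    | nil =>
      simp only [List.singleton_append, adjacentCount_cons_cons, adjacentCount_singleton]
      omega
    | cons y l₁ =>
      simp only [List.cons_append, adjacentCount_cons_cons] at ih ⊢
      omega

lemma adjacentCount_append_singleton_bounds (l : List α) (a : α) :
    adjacentCount p l ≤ adjacentCount p (l ++ [a]) ∧
      adjacentCount p (l ++ [a]) ≤ adjacentCount p l + 1 := by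
  rcases l.eq_nil_or_concat with rfl | ⟨l', b, rfl⟩
  · simp
  · rw [List.concat_eq_append, List.append_assoc, List.singleton_append,
      adjacentCount_append_cons p l' b [a], adjacentCount_cons_cons]
    split <;> simp

lemma adjacentCount_add_le_append (l₁ l₂ : List α) :
    adjacentCount p l₁ + adjacentCount p l₂ ≤ adjacentCount p (l₁ ++ l₂) := by
  cases l₂ with
  | nil => simp
  | cons a l₂ =>
    rw [adjacentCount_append_cons]
    have := (adjacentCount_append_singleton_bounds p l₁ a).1
    omega

lemma adjacentCount_append_le (l₁ l₂ : List α) :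
    adjacentCount p (l₁ ++ l₂) ≤ adjacentCount p l₁ + adjacentCount p l₂ + 1 := by
  cases l₂ with
  | nil => simp
  | cons a l₂ =>
    rw [adjacentCount_append_cons]
    have := (adjacentCount_append_singleton_bounds p l₁ a).2
    omega

variable {p}

lemma adjacentCount_reverse (hp : ∀ a b, p (a, b) = p (b, a)) (l : List α) :
    adjacentCount p l.reverse = adjacentCount p l := by
  induction l with
  | nil => rfl
  | cons x l ih =>
    cases l with
    | nil => rfl
    | cons y l =>
      rw [List.reverse_cons, List.reverse_cons, List.append_assoc, List.singleton_append,
        adjacentCount_append_cons, ← List.reverse_cons, ih, adjacentCount_cons_cons,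
        adjacentCount_cons_cons, hp]
      simp

lemma adjacentCount_append_append_le_transreverse (hp : ∀ a b, p (a, b) = p (b, a))
    (A B C : List α) :
    adjacentCount p (A ++ B ++ C) ≤ adjacentCount p (B ++ A.reverse ++ C) + 2 := by
  have hABC := adjacentCount_append_le p A (B ++ C)
  have hBC := adjacentCount_append_le p B C
  have hBAC := adjacentCount_add_le_append p B (A.reverse ++ C)
  have hAC := adjacentCount_add_le_append p A.reverse C
  rw [adjacentCount_reverse hp] at hAC
  simp only [List.append_assoc] at hBAC ⊢
  omega

end AdjacentCount

def isBreakpoint (q : ℕ × ℕ) : Bool :=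
  !(q.1 + 1 == q.2 || q.2 + 1 == q.1)

lemma isBreakpoint_swap (a b : ℕ) : isBreakpoint (a, b) = isBreakpoint (b, a) := by
  simp [isBreakpoint, Bool.or_comm]

lemma bp_eq_one_add_adjacentCount (π : List ℕ) :
    bp π = 1 + adjacentCount isBreakpoint (π.drop 1) := by
  simp only [bp, adjacentCount, List.tail_drop]
  rfl

lemma drop_one_eq_append_append (π : List ℕ) {j k : ℕ} (hj : 1 ≤ j) (hjk : j ≤ k) :
    π.drop 1 = (π.drop 1).take (j - 1) ++ (π.drop j).take (k - j) ++ π.drop k := by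
  have hdrop_j : (π.drop 1).drop (j - 1) = π.drop j := by
    rw [List.drop_drop]; congr 1; omega
  have hdrop_k : (π.drop j).drop (k - j) = π.drop k := by
    rw [List.drop_drop]; congr 1; omega
  rw [List.append_assoc, ← hdrop_k, List.take_append_drop, ← hdrop_j, List.take_append_drop]

lemma prefixTransreversal_drop_one (π : List ℕ) (j k : ℕ) :
    (prefixTransreversal π j k).drop 1 =
      (π.drop j).take (k - j) ++ ((π.drop 1).take (j - 1)).reverse ++ π.drop k := by
  cases π <;> simp [prefixTransreversal]

theorem prefixTransreversal_removes_at_most_two_breakpoints_general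
    (π : List ℕ)
    (j k : ℕ) (hj : 2 ≤ j) (hjk : j < k) :
    bp π - bp (prefixTransreversal π j k) ≤ 2 := by
  have hsplit := drop_one_eq_append_append π (by omega : 1 ≤ j) hjk.le
  have hcount := adjacentCount_append_append_le_transreverse isBreakpoint_swap
    ((π.drop 1).take (j - 1)) ((π.drop j).take (k - j)) (π.drop k)
  rw [← hsplit] at hcount
  rw [bp_eq_one_add_adjacentCount, bp_eq_one_add_adjacentCount, prefixTransreversal_drop_one]
  omega

/-- a prefix transreversal removes at most two breakpoints. -/
theorem prefixTransreversal_removes_at_most_two_breakpoints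
    (n : ℕ) (π : List ℕ) (hπ : IsPerm n π)
    (j k : ℕ) (hj : 2 ≤ j) (hjk : j < k) (hk : k ≤ n + 1) :
    bp π - bp (prefixTransreversal π j k) ≤ 2 :=
  prefixTransreversal_removes_at_most_two_breakpoints_general π j k hj hjk
end
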